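/- arXiv:1203.5884 — 4 statements merged into one kernel-verified Lean document; each statement's English description precedes it below -/
import Mathlib

section
/- Fix c ∈ (1,2), γ = 1/c, and let ψ(t) = t - ⌊t⌋ - 1/2. For any sequence of complex numbers (z_k) with |z_k| ≤ 1 and any K ≥ 1: Σ_{k ≤ K, k = ⌊n^c⌋ for some n ∈ ℕ} z_k = γ Σ_{k ≤ K} z_k k^{γ-1} + Σ_{k ≤ K} z_k (ψ(-(k+1)^γ) - ψ(-k^γ)) + O(1), where the implied constant depends only on c. -/
open scoped Classical

/-- The sawtooth function ψ(t) = t - ⌊t⌋ - 1/2. -/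
noncomputable def psi (t : ℝ) : ℝ := t - (⌊t⌋ : ℝ) - 1 / 2

/-!
An integer k ≥ 1 is of the form ⌊n^c⌋ exactly when the interval [k^γ, (k+1)^γ) contains an
integer. This interval has length at most 1, so the indicator of that event is
⌈(k+1)^γ⌉ - ⌈k^γ⌉ = (k+1)^γ - k^γ + ψ(-(k+1)^γ) - ψ(-k^γ). What remains is
Σ z_k (γ k^(γ-1) - ((k+1)^γ - k^γ)); by concavity of t ↦ t^γ each weight lies between 0 and
(k^γ - (k-1)^γ) - ((k+1)^γ - k^γ), and these bounds telescope to at most 1.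
-/

lemma psi_neg (x : ℝ) : psi (-x) = ⌈x⌉ - x - 1 / 2 := by
  simp only [psi, Int.floor_neg, Int.cast_neg]
  ring

lemma Int.ceil_sub_ceil_eq_ite {a b : ℝ} (hab : a ≤ b) (hba : b ≤ a + 1) :
    ((⌈b⌉ - ⌈a⌉ : ℤ) : ℝ) = if (⌈a⌉ : ℝ) < b then 1 else 0 := by
  have hmono : ⌈a⌉ ≤ ⌈b⌉ := Int.ceil_mono hab
  split_ifs with h
  · have hlt : ⌈a⌉ < ⌈b⌉ := Int.lt_ceil.2 h
    have hle : ⌈b⌉ ≤ ⌈a⌉ + 1 := Int.ceil_le.2 (by push_cast; linarith [Int.le_ceil a])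
    have : ⌈b⌉ - ⌈a⌉ = 1 := by omega
    simp [this]
  · have : ⌈b⌉ ≤ ⌈a⌉ := Int.ceil_le.2 (not_lt.1 h)
    have : ⌈b⌉ - ⌈a⌉ = 0 := by omega
    simp [this]

lemma Real.rpow_le_rpow_add_mul_sub {γ x y : ℝ} (hγ0 : 0 ≤ γ) (hγ1 : γ ≤ 1) (hx : 0 < x)
    (hy : 0 ≤ y) : y ^ γ ≤ x ^ γ + γ * x ^ (γ - 1) * (y - x) := by
  have hs : -1 ≤ (y - x) / x := by rw [le_div_iff₀ hx]; linarith
  have hy' : y = x * (1 + (y - x) / x) := by field_simp; ring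
  calc y ^ γ = x ^ γ * (1 + (y - x) / x) ^ γ := by
        conv_lhs => rw [hy']
        exact Real.mul_rpow hx.le (by linarith)
    _ ≤ x ^ γ * (1 + γ * ((y - x) / x)) :=
        mul_le_mul_of_nonneg_left (rpow_one_add_le_one_add_mul_self hs hγ0 hγ1)
          (Real.rpow_nonneg hx.le γ)
    _ = x ^ γ + γ * x ^ (γ - 1) * (y - x) := by
        rw [Real.rpow_sub hx, Real.rpow_one]; field_simp

lemma Real.rpow_add_one_sub_rpow_le {γ x : ℝ} (hγ0 : 0 ≤ γ) (hγ1 : γ ≤ 1) (hx : 0 < x) :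
    (x + 1) ^ γ - x ^ γ ≤ γ * x ^ (γ - 1) := by
  linarith [Real.rpow_le_rpow_add_mul_sub hγ0 hγ1 hx (y := x + 1) (by linarith)]

lemma Real.rpow_add_one_le_rpow_add_one {γ x : ℝ} (hγ0 : 0 ≤ γ) (hγ1 : γ ≤ 1) (hx : 1 ≤ x) :
    (x + 1) ^ γ ≤ x ^ γ + 1 := by
  have hx0 : 0 < x := by linarith
  have hpow : x ^ (γ - 1) ≤ 1 := Real.rpow_le_one_of_one_le_of_nonpos hx (by linarith)
  nlinarith [Real.rpow_add_one_sub_rpow_le hγ0 hγ1 hx0, Real.rpow_nonneg hx0.le (γ - 1)]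

lemma floor_rpow_eq_iff {c : ℝ} (hc : 0 < c) (n k : ℕ) :
    (k : ℤ) = ⌊(n : ℝ) ^ c⌋ ↔ (k : ℝ) ^ c⁻¹ ≤ n ∧ (n : ℝ) < ((k : ℝ) + 1) ^ c⁻¹ := by
  rw [eq_comm, Int.floor_eq_iff, Real.rpow_inv_le_iff_of_pos (by positivity) (by positivity) hc,
    Real.lt_rpow_inv_iff_of_pos (by positivity) (by positivity) hc]
  push_cast
  rfl

lemma exists_floor_rpow_eq_iff {c : ℝ} (hc : 0 < c) {k : ℕ} (hk : k ≠ 0) :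
    (∃ n : ℕ, 0 < n ∧ (k : ℤ) = ⌊(n : ℝ) ^ c⌋) ↔
      (⌈(k : ℝ) ^ c⁻¹⌉ : ℝ) < ((k : ℝ) + 1) ^ c⁻¹ := by
  simp only [floor_rpow_eq_iff hc]
  have hpos : 0 < (k : ℝ) ^ c⁻¹ := by positivity
  constructor
  · rintro ⟨n, -, hkn, hnk⟩
    exact lt_of_le_of_lt (by exact_mod_cast Int.ceil_le.2 (by exact_mod_cast hkn)) hnk
  · intro h
    have hceil : 0 < ⌈(k : ℝ) ^ c⁻¹⌉ := Int.ceil_pos.2 hpos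
    refine ⟨⌈(k : ℝ) ^ c⁻¹⌉.toNat, by omega, ?_, ?_⟩ <;>
      rw [show ((⌈(k : ℝ) ^ c⁻¹⌉.toNat : ℕ) : ℝ) = (⌈(k : ℝ) ^ c⁻¹⌉ : ℝ) by
        exact_mod_cast Int.toNat_of_nonneg hceil.le]
    exacts [Int.le_ceil _, h]

lemma ite_exists_floor_rpow_eq {c : ℝ} (hc : 1 ≤ c) {k : ℕ} (hk : k ≠ 0) :
    (if ∃ n : ℕ, 0 < n ∧ (k : ℤ) = ⌊(n : ℝ) ^ c⌋ then (1 : ℝ) else 0) =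
      ((⌈((k : ℝ) + 1) ^ c⁻¹⌉ - ⌈(k : ℝ) ^ c⁻¹⌉ : ℤ) : ℝ) := by
  have hk1 : (1 : ℝ) ≤ k := by exact_mod_cast Nat.one_le_iff_ne_zero.2 hk
  have hγ0 : 0 ≤ c⁻¹ := by positivity
  rw [Int.ceil_sub_ceil_eq_ite
      (Real.rpow_le_rpow (by positivity) (by linarith) hγ0)
      (Real.rpow_add_one_le_rpow_add_one hγ0 (inv_le_one_of_one_le₀ hc) hk1),
    exists_floor_rpow_eq_iff (by linarith) hk]

lemma ite_exists_floor_rpow_eq_add_psi {c : ℝ} (hc : 1 ≤ c) {k : ℕ} (hk : k ≠ 0) :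
    (if ∃ n : ℕ, 0 < n ∧ (k : ℤ) = ⌊(n : ℝ) ^ c⌋ then (1 : ℝ) else 0) =
      (((k : ℝ) + 1) ^ c⁻¹ - (k : ℝ) ^ c⁻¹)
        + (psi (-(((k : ℝ) + 1) ^ c⁻¹)) - psi (-((k : ℝ) ^ c⁻¹))) := by
  rw [ite_exists_floor_rpow_eq hc hk, psi_neg, psi_neg]
  push_cast
  ring

lemma sum_Icc_le_sub_of_le_sub {g f : ℕ → ℝ} (h : ∀ k, 1 ≤ k → g k ≤ f k - f (k + 1)) (K : ℕ) :
    ∑ k ∈ Finset.Icc 1 K, g k ≤ f 1 - f (K + 1) := by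
  induction K with
  | zero => simp
  | succ K ih =>
    rw [Finset.sum_Icc_succ_top (by omega)]
    linarith [h (K + 1) (by omega)]

lemma sum_Icc_tangent_sub_rpow_le {γ : ℝ} (hγ0 : 0 < γ) (hγ1 : γ ≤ 1) (K : ℕ) :
    ∑ k ∈ Finset.Icc 1 K, (γ * (k : ℝ) ^ (γ - 1) - (((k : ℝ) + 1) ^ γ - (k : ℝ) ^ γ)) ≤ 1 := by
  have hstep : ∀ k : ℕ, 1 ≤ k → γ * (k : ℝ) ^ (γ - 1) - (((k : ℝ) + 1) ^ γ - (k : ℝ) ^ γ) ≤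
      ((k : ℝ) ^ γ - ((k : ℝ) - 1) ^ γ) -
        (((k + 1 : ℕ) : ℝ) ^ γ - (((k + 1 : ℕ) : ℝ) - 1) ^ γ) := by
    intro k hk
    have hk1 : (1 : ℝ) ≤ k := by exact_mod_cast hk
    have := Real.rpow_le_rpow_add_mul_sub hγ0.le hγ1 (by linarith : (0 : ℝ) < k)
      (y := (k : ℝ) - 1) (by linarith)
    push_cast
    rw [add_sub_cancel_right]
    linarith
  refine (sum_Icc_le_sub_of_le_sub hstep K).trans ?_
  have hmono : (K : ℝ) ^ γ ≤ ((K : ℝ) + 1) ^ γ :=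
    Real.rpow_le_rpow (by positivity) (by linarith) hγ0.le
  push_cast
  rw [sub_self, Real.zero_rpow hγ0.ne', Real.one_rpow, add_sub_cancel_right]
  linarith

lemma norm_sum_mul_ofReal_le {ι : Type*} {s : Finset ι} {z : ι → ℂ} {d : ι → ℝ}
    (hz : ∀ k, ‖z k‖ ≤ 1) (hd : ∀ k ∈ s, 0 ≤ d k) : ‖∑ k ∈ s, z k * d k‖ ≤ ∑ k ∈ s, d k := by
  refine (norm_sum_le _ _).trans (Finset.sum_le_sum fun k hk => ?_)
  rw [norm_mul, Complex.norm_real, Real.norm_of_nonneg (hd k hk)]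
  exact mul_le_of_le_one_left (hd k hk) (hz k)

theorem stmt_5_general (c γ : ℝ) (hc1 : 1 < c) (hγ : γ = 1 / c) :
    ∃ C > 0, ∀ z : ℕ → ℂ, (∀ k, ‖z k‖ ≤ 1) → ∀ K : ℕ, 1 ≤ K →
      ‖(∑ k ∈ (Finset.Icc 1 K).filter
            (fun k : ℕ => ∃ n : ℕ, 0 < n ∧ (k : ℤ) = ⌊(n : ℝ) ^ c⌋), z k)
        - ((Complex.ofReal γ) * ∑ k ∈ Finset.Icc 1 K,
              z k * Complex.ofReal ((k : ℝ) ^ (γ - 1))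
           + ∑ k ∈ Finset.Icc 1 K,
              z k * Complex.ofReal
                (psi (-(((k : ℝ) + 1) ^ γ)) - psi (-((k : ℝ) ^ γ))))‖ ≤ C := by
  obtain rfl : γ = c⁻¹ := hγ.trans (one_div c)
  have hγ0 : 0 < c⁻¹ := by positivity
  have hγ1 : c⁻¹ ≤ 1 := inv_le_one_of_one_le₀ hc1.le
  refine ⟨1, one_pos, fun z hz K _ => ?_⟩
  have hterm : ∀ k ∈ Finset.Icc 1 K,
      ((if ∃ n : ℕ, 0 < n ∧ (k : ℤ) = ⌊(n : ℝ) ^ c⌋ then z k else 0) -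
        ((c⁻¹ : ℝ) * (z k * ((k : ℝ) ^ (c⁻¹ - 1) : ℝ)) +
          z k * ((psi (-(((k : ℝ) + 1) ^ c⁻¹)) - psi (-((k : ℝ) ^ c⁻¹)) : ℝ) : ℂ))) =
        -(z k * ((c⁻¹ * (k : ℝ) ^ (c⁻¹ - 1) - (((k : ℝ) + 1) ^ c⁻¹ - (k : ℝ) ^ c⁻¹) : ℝ) : ℂ)) :=
    fun k hk => by
    have hind := congrArg Complex.ofReal
      (ite_exists_floor_rpow_eq_add_psi hc1.le (k := k)
        (Nat.one_le_iff_ne_zero.1 (Finset.mem_Icc.1 hk).1))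
    split_ifs at hind ⊢ <;> push_cast at hind ⊢ <;> linear_combination z k * hind
  rw [Finset.sum_filter, Finset.mul_sum, ← Finset.sum_add_distrib, ← Finset.sum_sub_distrib,
    Finset.sum_congr rfl hterm, Finset.sum_neg_distrib, norm_neg]
  refine (norm_sum_mul_ofReal_le hz fun k hk => ?_).trans (sum_Icc_tangent_sub_rpow_le hγ0 hγ1 K)
  exact sub_nonneg.2 (Real.rpow_add_one_sub_rpow_le hγ0.le hγ1
    (by exact_mod_cast (Finset.mem_Icc.1 hk).1))

theorem stmt_5 (c γ : ℝ) (hc1 : 1 < c) (hc2 : c < 2) (hγ : γ = 1 / c) :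
    ∃ C > 0, ∀ z : ℕ → ℂ, (∀ k, ‖z k‖ ≤ 1) → ∀ K : ℕ, 1 ≤ K →
      ‖(∑ k ∈ (Finset.Icc 1 K).filter
            (fun k : ℕ => ∃ n : ℕ, 0 < n ∧ (k : ℤ) = ⌊(n : ℝ) ^ c⌋), z k)
        - ((Complex.ofReal γ) * ∑ k ∈ Finset.Icc 1 K,
              z k * Complex.ofReal ((k : ℝ) ^ (γ - 1))
           + ∑ k ∈ Finset.Icc 1 K,
              z k * Complex.ofReal
                (psi (-(((k : ℝ) + 1) ^ γ)) - psi (-((k : ℝ) ^ γ))))‖ ≤ C :=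
  stmt_5_general c γ hc1 hγ
end

section
/- Let α, β, γ be real numbers with αβ ≠ 0, let K, L ≥ 1, and define u(k,ℓ) = k^α ℓ^β / (K^α L^β) for k ∼ K, ℓ ∼ L (i.e., K < k ≤ 2K, L < ℓ ≤ 2L). Then for any C > 0, the number of quadruples (k, k', ℓ, ℓ') with k, k' ∼ K, ℓ, ℓ' ∼ L and |u(k,ℓ) - u(k',ℓ')| ≤ C is O(KL·log(2KL) + K²L²C), with implied constant depending only on α and β. -/
/-!
Since `u(k, ℓ) ≥ 2^(-(|α| + |β|))`, the condition `|u(k, ℓ) - u(k', ℓ')| ≤ C` forces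
`|α log (k / k') + β log (ℓ / ℓ')| ≤ δ` with `δ = 2^(|α| + |β|) C`. Sort the quadruples by
`g = gcd (k, k')` and `h = gcd (ℓ, ℓ')`. For fixed `(k, k')` (at most `(3K/g)²` choices) the
values `log (ℓ / ℓ')` over pairs with gcd `h` are `h² / 4L²`-separated, because `ℓ m' - m ℓ'` is
a nonzero multiple of `h²`, and they lie in an interval of length `2δ / |β|`. So the
`(g, h)`-class has at most `(K/g)² (δ (L/h)² / |β| + 1)` elements up to constants, and
symmetrically at most `(L/h)² (δ (K/g)² / |α| + 1)`. Summing the smaller bound over `g ≤ 2K`,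
`h ≤ 2L`, the `δ` terms give `δ K² L²` through `∑ 1/g²`, and the minima give `K L log (K L)`
through harmonic sums.
-/

open Finset Real

theorem card_le_of_separated {ι : Type*} (s : Finset ι) (f : ι → ℝ) {ε a b : ℝ} (hε : 0 < ε)
    (hab : a ≤ b) (hf : ∀ i ∈ s, f i ∈ Set.Icc a b)
    (hsep : ∀ i ∈ s, ∀ j ∈ s, i ≠ j → ε ≤ |f i - f j|) :
    (#s : ℝ) ≤ (b - a) / ε + 1 := by
  set cell : ι → ℕ := fun i => ⌊(f i - a) / ε⌋₊
  have hcell_le (i : ι) (hi : i ∈ s) : (cell i : ℝ) ≤ (f i - a) / ε :=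
    Nat.floor_le (div_nonneg (by linarith [(hf i hi).1]) hε.le)
  have hcell_inj : Set.InjOn cell s := by
    intro i hi j hj hij
    by_contra hne
    have bounds (k : ι) (hk : k ∈ s) : cell k * ε ≤ f k - a ∧ f k - a < (cell k + 1) * ε :=
      ⟨(le_div_iff₀ hε).1 (hcell_le k hk), (div_lt_iff₀ hε).1 (Nat.lt_floor_add_one _)⟩
    obtain ⟨hi₁, hi₂⟩ := bounds i hi
    obtain ⟨hj₁, hj₂⟩ := bounds j hj
    rw [hij] at hi₁ hi₂
    exact (hsep i hi j hj hne).not_gt (abs_sub_lt_iff.2 ⟨by linarith, by linarith⟩)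
  have hmaps : Set.MapsTo cell s (range (⌊(b - a) / ε⌋₊ + 1)) := fun i hi => by
    simp only [coe_range, Set.mem_Iio, Nat.lt_succ_iff, cell]
    exact Nat.floor_le_floor (by gcongr; exact (hf i hi).2)
  calc (#s : ℝ) ≤ ⌊(b - a) / ε⌋₊ + 1 := by
        exact_mod_cast (card_le_card_of_injOn cell hmaps hcell_inj).trans (card_range _).le
    _ ≤ (b - a) / ε + 1 := by gcongr; exact Nat.floor_le (div_nonneg (by linarith) hε.le)

theorem abs_sub_div_le_abs_log_sub_log {a b M : ℝ} (ha : 0 < a) (hb : 0 < b) (haM : a ≤ M)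
    (hbM : b ≤ M) : |a - b| / M ≤ |log a - log b| := by
  wlog hba : b ≤ a generalizing a b
  · rw [abs_sub_comm, abs_sub_comm (log a)]
    exact this hb ha hbM haM (le_of_not_ge hba)
  have hlog : 1 - (a / b)⁻¹ ≤ log (a / b) := one_sub_inv_le_log_of_pos (div_pos ha hb)
  rw [log_div ha.ne' hb.ne', inv_div] at hlog
  rw [abs_of_nonneg (sub_nonneg.2 hba), abs_of_nonneg (sub_nonneg.2 (log_le_log hb hba))]
  calc (a - b) / M ≤ (a - b) / a := div_le_div_of_nonneg_left (sub_nonneg.2 hba) ha haM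
    _ = 1 - b / a := by field_simp
    _ ≤ log a - log b := hlog

theorem abs_sub_le_exp_mul_abs_exp_sub {x y c : ℝ} (hx : -c ≤ x) (hy : -c ≤ y) :
    |x - y| ≤ exp c * |exp x - exp y| := by
  wlog hyx : y ≤ x generalizing x y
  · rw [abs_sub_comm, abs_sub_comm (exp x)]
    exact this hy hx (le_of_not_ge hyx)
  have hexp : exp y * (x - y) ≤ exp x - exp y := by
    have := mul_le_mul_of_nonneg_left (add_one_le_exp (x - y)) (exp_pos y).le
    rw [mul_add, ← exp_add] at this
    simp only [add_sub_cancel, mul_one] at this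
    linarith
  have hone : 1 ≤ exp c * exp y := by
    rw [← exp_add]; exact one_le_exp (by linarith)
  rw [abs_of_nonneg (sub_nonneg.2 hyx), abs_of_nonneg (sub_nonneg.2 (exp_le_exp.2 hyx))]
  calc x - y ≤ exp c * exp y * (x - y) := le_mul_of_one_le_left (sub_nonneg.2 hyx) hone
    _ ≤ exp c * (exp x - exp y) := by
      rw [mul_assoc]; exact mul_le_mul_of_nonneg_left hexp (exp_pos c).le

theorem Int.eq_and_eq_of_mul_eq_mul_of_gcd_eq {l l' m m' : ℤ} (hl' : 0 < l') (hm' : 0 < m')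
    (hgcd : l.gcd l' = m.gcd m') (h : l * m' = m * l') : l = m ∧ l' = m' := by
  have hpos : 0 < m.gcd m' := Int.gcd_pos_of_ne_zero_right m hm'.ne'
  have habs : l'.natAbs = m'.natAbs := by
    have := Int.gcd_mul_right l m' l'
    rw [h, mul_comm l' m', Int.gcd_mul_right, hgcd] at this
    exact Nat.eq_of_mul_eq_mul_left hpos this
  have hl'm' : l' = m' := by omega
  subst hl'm'
  exact ⟨mul_right_cancel₀ hl'.ne' h, rfl⟩

noncomputable def dyadic (K : ℝ) : Finset ℤ := Ioc ⌊K⌋ ⌊2 * K⌋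

theorem mem_dyadic {K : ℝ} {k : ℤ} : k ∈ dyadic K ↔ K < k ∧ (k : ℝ) ≤ 2 * K := by
  simp only [dyadic, mem_Ioc, Int.floor_lt, Int.le_floor]

theorem card_filter_dvd_dyadic_le {K : ℝ} {g : ℕ} (hg : 0 < g) (hgK : (g : ℝ) ≤ 2 * K) :
    (#{k ∈ dyadic K | (g : ℤ) ∣ k} : ℝ) ≤ 3 * K / g := by
  have hgR : (0 : ℝ) < g := Nat.cast_pos.2 hg
  have hcount := card_le_of_separated {k ∈ dyadic K | (g : ℤ) ∣ k} (fun k => (k : ℝ)) hgR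
    (a := K) (b := 2 * K) (by linarith) (fun k hk => by
      obtain ⟨hk₁, hk₂⟩ := mem_dyadic.1 (mem_filter.1 hk).1
      exact ⟨hk₁.le, hk₂⟩)
    (fun k hk k' hk' hne => by
      have hdvd : (g : ℤ) ∣ k - k' := dvd_sub (mem_filter.1 hk).2 (mem_filter.1 hk').2
      exact_mod_cast Int.le_abs_of_dvd (sub_ne_zero.2 hne) hdvd)
  calc (#{k ∈ dyadic K | (g : ℤ) ∣ k} : ℝ) ≤ (2 * K - K) / g + 1 := hcount
    _ ≤ 3 * K / g := by
      rw [div_add_one hgR.ne', div_le_div_iff_of_pos_right hgR]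
      linarith

noncomputable def logRatio (p : ℤ × ℤ) : ℝ := log p.1 - log p.2

theorem sq_gcd_div_le_abs_logRatio_sub {L : ℝ} (hL : 0 < L) {p q : ℤ × ℤ}
    (hp : p ∈ dyadic L ×ˢ dyadic L) (hq : q ∈ dyadic L ×ˢ dyadic L)
    (hgcd : p.1.gcd p.2 = q.1.gcd q.2) (hpq : p ≠ q) :
    ((p.1.gcd p.2 : ℕ) : ℝ) ^ 2 / (4 * L ^ 2) ≤ |logRatio p - logRatio q| := by
  obtain ⟨⟨hp₁, hp₁'⟩, ⟨hp₂, hp₂'⟩⟩ := And.imp mem_dyadic.1 mem_dyadic.1 (mem_product.1 hp)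
  obtain ⟨⟨hq₁, hq₁'⟩, ⟨hq₂, hq₂'⟩⟩ := And.imp mem_dyadic.1 mem_dyadic.1 (mem_product.1 hq)
  have hp₁0 : (0 : ℝ) < p.1 := hL.trans hp₁
  have hp₂0 : (0 : ℝ) < p.2 := hL.trans hp₂
  have hq₁0 : (0 : ℝ) < q.1 := hL.trans hq₁
  have hq₂0 : (0 : ℝ) < q.2 := hL.trans hq₂
  set h := p.1.gcd p.2
  have hcross : p.1 * q.2 ≠ q.1 * p.2 := fun heq => by
    obtain ⟨h₁, h₂⟩ := Int.eq_and_eq_of_mul_eq_mul_of_gcd_eq (by exact_mod_cast hp₂0)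
      (by exact_mod_cast hq₂0) hgcd heq
    exact hpq (Prod.ext h₁ h₂)
  have hdvd : (h : ℤ) ^ 2 ∣ p.1 * q.2 - q.1 * p.2 := by
    rw [sq]
    refine dvd_sub (mul_dvd_mul (Int.gcd_dvd_left _ _) ?_) (mul_dvd_mul ?_ (Int.gcd_dvd_right _ _))
    · rw [hgcd]; exact Int.gcd_dvd_right _ _
    · rw [hgcd]; exact Int.gcd_dvd_left _ _
  have hdiff : (h : ℝ) ^ 2 ≤ |(p.1 : ℝ) * q.2 - q.1 * p.2| := by
    exact_mod_cast Int.le_abs_of_dvd (sub_ne_zero.2 hcross) hdvd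
  have hlog : logRatio p - logRatio q = log (p.1 * q.2) - log (q.1 * p.2) := by
    rw [logRatio, logRatio, log_mul hp₁0.ne' hq₂0.ne', log_mul hq₁0.ne' hp₂0.ne']
    ring
  rw [hlog]
  calc (h : ℝ) ^ 2 / (4 * L ^ 2) ≤ |(p.1 : ℝ) * q.2 - q.1 * p.2| / (4 * L ^ 2) := by gcongr
    _ ≤ |log (p.1 * q.2) - log (q.1 * p.2)| :=
      abs_sub_div_le_abs_log_sub_log (by positivity) (by positivity) (by nlinarith) (by nlinarith)

theorem card_filter_gcd_eq_abs_add_le {β L δ : ℝ} (hβ : β ≠ 0) (hL : 0 < L) (hδ : 0 ≤ δ)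
    {h : ℕ} (hh : 0 < h) (t : ℝ) :
    (#{l ∈ dyadic L ×ˢ dyadic L | l.1.gcd l.2 = h ∧ |t + β * logRatio l| ≤ δ} : ℝ)
      ≤ 8 * δ * L ^ 2 / (|β| * h ^ 2) + 1 := by
  have hε : 0 < |β| * ((h : ℝ) ^ 2 / (4 * L ^ 2)) := by positivity
  have hcount := card_le_of_separated
    {l ∈ dyadic L ×ˢ dyadic L | l.1.gcd l.2 = h ∧ |t + β * logRatio l| ≤ δ}
    (fun l => β * logRatio l) hε (a := -t - δ) (b := -t + δ)
    (by linarith) (fun l hl => by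
      have := abs_le.1 (mem_filter.1 hl).2.2
      exact ⟨by linarith, by linarith⟩)
    (fun l hl m hm hne => by
      obtain ⟨hl, hlh, -⟩ := mem_filter.1 hl
      obtain ⟨hm, hmh, -⟩ := mem_filter.1 hm
      rw [← mul_sub, abs_mul, ← hlh]
      exact mul_le_mul_of_nonneg_left
        (sq_gcd_div_le_abs_logRatio_sub hL hl hm (hlh.trans hmh.symm) hne) (abs_nonneg β))
  convert hcount using 2
  field_simp
  ring

noncomputable def nearSet (α β K L δ : ℝ) : Finset ((ℤ × ℤ) × (ℤ × ℤ)) :=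
  {q ∈ (dyadic K ×ˢ dyadic K) ×ˢ (dyadic L ×ˢ dyadic L) |
    |α * logRatio q.1 + β * logRatio q.2| ≤ δ}

def gcds (q : (ℤ × ℤ) × (ℤ × ℤ)) : ℕ × ℕ := (q.1.1.gcd q.1.2, q.2.1.gcd q.2.2)

theorem card_filter_product_eq_sum {ι κ : Type*} (s : Finset ι) (t : Finset κ)
    (P : ι × κ → Prop) [DecidablePred P] :
    #{x ∈ s ×ˢ t | P x} = ∑ a ∈ s, #{b ∈ t | P (a, b)} := by
  simp only [card_filter, sum_product]

theorem card_fiber_le {α β K L δ : ℝ} (hβ : β ≠ 0) (hL : 0 < L) (hδ : 0 ≤ δ) {g h : ℕ}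
    (hg : 0 < g) (hgK : (g : ℝ) ≤ 2 * K) (hh : 0 < h) :
    (#{q ∈ nearSet α β K L δ | gcds q = (g, h)} : ℝ)
      ≤ (3 * K / g) ^ 2 * (8 * δ * L ^ 2 / (|β| * h ^ 2) + 1) := by
  set multiples := {k ∈ dyadic K | (g : ℤ) ∣ k}
  have hsub : {q ∈ nearSet α β K L δ | gcds q = (g, h)} ⊆
      {q ∈ (multiples ×ˢ multiples) ×ˢ (dyadic L ×ˢ dyadic L) |
        q.2.1.gcd q.2.2 = h ∧ |α * logRatio q.1 + β * logRatio q.2| ≤ δ} := by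
    intro q hq
    simp only [nearSet, gcds, mem_filter, mem_product, Prod.mk.injEq, multiples] at hq ⊢
    obtain ⟨⟨⟨⟨hk, hk'⟩, hl⟩, hδq⟩, hgq, hhq⟩ := hq
    refine ⟨⟨⟨⟨hk, ?_⟩, hk', ?_⟩, hl⟩, hhq, hδq⟩
    · rw [← hgq]; exact Int.gcd_dvd_left _ _
    · rw [← hgq]; exact Int.gcd_dvd_right _ _
  calc (#{q ∈ nearSet α β K L δ | gcds q = (g, h)} : ℝ)
      ≤ ∑ p ∈ multiples ×ˢ multiples, (#{l ∈ dyadic L ×ˢ dyadic L |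
          l.1.gcd l.2 = h ∧ |α * logRatio p + β * logRatio l| ≤ δ} : ℝ) := by
        exact_mod_cast (card_le_card hsub).trans_eq (card_filter_product_eq_sum _ _ _)
    _ ≤ ∑ p ∈ multiples ×ˢ multiples, (8 * δ * L ^ 2 / (|β| * h ^ 2) + 1) :=
        sum_le_sum fun p _ => card_filter_gcd_eq_abs_add_le hβ hL hδ hh _
    _ = (#multiples : ℝ) ^ 2 * (8 * δ * L ^ 2 / (|β| * h ^ 2) + 1) := by
        rw [sum_const, card_product, nsmul_eq_mul]; push_cast; ring
    _ ≤ (3 * K / g) ^ 2 * (8 * δ * L ^ 2 / (|β| * h ^ 2) + 1) := by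
        gcongr; exact card_filter_dvd_dyadic_le hg hgK

theorem card_fiber_comm (α β K L δ : ℝ) (g h : ℕ) :
    #{q ∈ nearSet β α L K δ | gcds q = (h, g)} = #{q ∈ nearSet α β K L δ | gcds q = (g, h)} := by
  refine card_nbij' Prod.swap Prod.swap ?_ ?_ (fun _ _ => rfl) (fun _ _ => rfl) <;>
  · intro q hq
    simp only [nearSet, gcds, mem_coe, mem_filter, mem_product, Prod.fst_swap, Prod.snd_swap,
      Prod.mk.injEq] at hq ⊢
    rw [add_comm]
    tauto

theorem card_fiber_le_add_min {α β K L δ : ℝ} (hα : α ≠ 0) (hβ : β ≠ 0) (hK : 0 < K)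
    (hL : 0 < L) (hδ : 0 ≤ δ) {g h : ℕ} (hg : 0 < g) (hgK : (g : ℝ) ≤ 2 * K) (hh : 0 < h)
    (hhL : (h : ℝ) ≤ 2 * L) :
    (#{q ∈ nearSet α β K L δ | gcds q = (g, h)} : ℝ)
      ≤ 72 * δ * (1 / |α| + 1 / |β|) * ((K / g) ^ 2 * (L / h) ^ 2)
        + 9 * min ((K / g) ^ 2) ((L / h) ^ 2) := by
  have hK_side := card_fiber_le (α := α) hβ hL hδ hg hgK hh
  have hL_side := card_fiber_le (α := β) hα hK hδ hh hhL hg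
  rw [card_fiber_comm] at hL_side
  have hgR : (0 : ℝ) < g := Nat.cast_pos.2 hg
  have hhR : (0 : ℝ) < h := Nat.cast_pos.2 hh
  have hαδ : 0 ≤ 72 * δ / |α| * ((K / g) ^ 2 * (L / h) ^ 2) := by positivity
  have hβδ : 0 ≤ 72 * δ / |β| * ((K / g) ^ 2 * (L / h) ^ 2) := by positivity
  have hsplit : 72 * δ * (1 / |α| + 1 / |β|) * ((K / g) ^ 2 * (L / h) ^ 2)
      = 72 * δ / |α| * ((K / g) ^ 2 * (L / h) ^ 2)
        + 72 * δ / |β| * ((K / g) ^ 2 * (L / h) ^ 2) := by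
    ring
  have hK_eq : (3 * K / g) ^ 2 * (8 * δ * L ^ 2 / (|β| * h ^ 2) + 1)
      = 72 * δ / |β| * ((K / g) ^ 2 * (L / h) ^ 2) + 9 * (K / g) ^ 2 := by
    field_simp; ring
  have hL_eq : (3 * L / h) ^ 2 * (8 * δ * K ^ 2 / (|α| * g ^ 2) + 1)
      = 72 * δ / |α| * ((K / g) ^ 2 * (L / h) ^ 2) + 9 * (L / h) ^ 2 := by
    field_simp; ring
  rcases le_total ((K / g) ^ 2) ((L / h) ^ 2) with hle | hle
  · rw [min_eq_left hle]; linarith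
  · rw [min_eq_right hle]; linarith

theorem sum_Icc_div_sq_le (K : ℝ) (M : ℕ) : ∑ g ∈ Icc 1 M, (K / g) ^ 2 ≤ 2 * K ^ 2 := by
  have hIcc : Icc 1 M = Ioo 0 (M + 1) := by ext; simp only [mem_Icc, mem_Ioo]; omega
  have := sum_Ioo_inv_sq_le (α := ℝ) 0 (M + 1)
  simp only [div_pow, div_eq_mul_inv (K ^ 2), ← mul_sum, hIcc]
  norm_num at this
  nlinarith [sq_nonneg K]

theorem sum_Icc_inv_le_one_add_log (M : ℕ) : ∑ g ∈ Icc 1 M, (g : ℝ)⁻¹ ≤ 1 + log M := by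
  have := harmonic_le_one_add_log M
  simp_rw [harmonic_eq_sum_Icc, Rat.cast_sum, Rat.cast_inv, Rat.cast_natCast] at this
  exact this

theorem sum_Icc_ite_le {A L : ℝ} (hA : 0 < A) (hL : 0 ≤ L) (N : ℕ) :
    ∑ h ∈ Icc 1 N, (if A ≤ L / h then A ^ 2 else 0) ≤ A * L := by
  rw [← sum_filter, sum_const, nsmul_eq_mul]
  set S := (Icc 1 N).filter fun h : ℕ => A ≤ L / h
  have hsub : S ⊆ Icc 1 ⌊L / A⌋₊ := by
    intro h hh
    obtain ⟨hh, hAh⟩ := mem_filter.1 hh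
    have hpos : (0 : ℝ) < h := Nat.cast_pos.2 (mem_Icc.1 hh).1
    refine mem_Icc.2 ⟨(mem_Icc.1 hh).1, Nat.le_floor ?_⟩
    rw [le_div_iff₀ hA]
    rw [le_div_iff₀ hpos] at hAh
    linarith
  have hcard : (#S : ℝ) ≤ L / A :=
    calc (#S : ℝ) ≤ #(Icc 1 ⌊L / A⌋₊) := by exact_mod_cast card_le_card hsub
      _ ≤ L / A := by rw [Nat.card_Icc, Nat.add_sub_cancel]; exact Nat.floor_le (by positivity)
  calc (#S : ℝ) * A ^ 2 ≤ L / A * A ^ 2 := by gcongr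
    _ = A * L := by field_simp

theorem sum_min_sq_le {K L : ℝ} (hK : 0 < K) (hL : 0 < L) (M N : ℕ) :
    ∑ g ∈ Icc 1 M, ∑ h ∈ Icc 1 N, min ((K / g) ^ 2) ((L / h) ^ 2)
      ≤ K * L * (2 + log M + log N) := by
  have hsplit (g h : ℕ) : min ((K / g) ^ 2) ((L / h) ^ 2)
      ≤ (if K / g ≤ L / h then (K / g) ^ 2 else 0)
        + (if L / h ≤ K / g then (L / h) ^ 2 else 0) := by
    rcases le_total (K / g) (L / h) with hle | hle
    · have : (0 : ℝ) ≤ if L / h ≤ K / g then (L / h) ^ 2 else 0 := by split_ifs <;> positivity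
      rw [if_pos hle]; linarith [min_le_left ((K / g) ^ 2) ((L / h) ^ 2)]
    · have : (0 : ℝ) ≤ if K / g ≤ L / h then (K / g) ^ 2 else 0 := by split_ifs <;> positivity
      rw [if_pos hle]; linarith [min_le_right ((K / g) ^ 2) ((L / h) ^ 2)]
  have hpos {n n' : ℕ} (hn : n ∈ Icc 1 n') : (0 : ℝ) < n := Nat.cast_pos.2 (mem_Icc.1 hn).1
  calc ∑ g ∈ Icc 1 M, ∑ h ∈ Icc 1 N, min ((K / g) ^ 2) ((L / h) ^ 2)
      ≤ ∑ g ∈ Icc 1 M, ∑ h ∈ Icc 1 N, (if K / g ≤ L / h then (K / g) ^ 2 else 0)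
        + ∑ h ∈ Icc 1 N, ∑ g ∈ Icc 1 M, (if L / h ≤ K / g then (L / h) ^ 2 else 0) := by
        rw [sum_comm (s := Icc 1 N), ← sum_add_distrib]
        exact sum_le_sum fun g _ => (sum_le_sum fun h _ => hsplit g h).trans_eq sum_add_distrib
    _ ≤ ∑ g ∈ Icc 1 M, K / g * L + ∑ h ∈ Icc 1 N, L / h * K := by
        gcongr with g hg h hh
        · exact sum_Icc_ite_le (div_pos hK (hpos hg)) hL.le N
        · exact sum_Icc_ite_le (div_pos hL (hpos hh)) hK.le M
    _ = K * L * ∑ g ∈ Icc 1 M, (g : ℝ)⁻¹ + K * L * ∑ h ∈ Icc 1 N, (h : ℝ)⁻¹ := by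
        simp only [mul_sum, div_eq_mul_inv]; congr 1 <;> exact sum_congr rfl fun _ _ => by ring
    _ ≤ K * L * (1 + log M) + K * L * (1 + log N) := by
        gcongr <;> exact sum_Icc_inv_le_one_add_log _
    _ = K * L * (2 + log M + log N) := by ring

theorem gcd_mem_Icc_of_mem_dyadic {K : ℝ} (hK : 0 < K) {p : ℤ × ℤ}
    (hp : p ∈ dyadic K ×ˢ dyadic K) : p.1.gcd p.2 ∈ Icc 1 ⌊2 * K⌋₊ := by
  obtain ⟨hk, hk'⟩ := mem_dyadic.1 (mem_product.1 hp).1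
  have hpos : 0 < p.1 := by exact_mod_cast hK.trans hk
  have hle : (p.1.gcd p.2 : ℤ) ≤ p.1 := Int.le_of_dvd hpos (Int.gcd_dvd_left _ _)
  refine mem_Icc.2 ⟨Int.gcd_pos_of_ne_zero_left _ hpos.ne', Nat.le_floor ?_⟩
  calc ((p.1.gcd p.2 : ℕ) : ℝ) = ((p.1.gcd p.2 : ℤ) : ℝ) := rfl
    _ ≤ p.1 := by exact_mod_cast hle
    _ ≤ 2 * K := hk'

theorem two_add_log_add_log_le {K L : ℝ} (hK : 1 ≤ K) (hL : 1 ≤ L) :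
    2 + log ⌊2 * K⌋₊ + log ⌊2 * L⌋₊ ≤ 5 * log (2 * K * L) := by
  have hlog_floor {x : ℝ} (hx : 1 ≤ x) (hxKL : x ≤ K * L) : log ⌊2 * x⌋₊ ≤ log (2 * K * L) := by
    have hpos : (0 : ℝ) < ⌊2 * x⌋₊ := Nat.cast_pos.2 (Nat.floor_pos.2 (by linarith))
    exact log_le_log hpos ((Nat.floor_le (by linarith)).trans (by linarith))
  have hlog2 : log 2 ≤ log (2 * K * L) := log_le_log (by norm_num) (by nlinarith)
  linarith [hlog_floor hK (by nlinarith), hlog_floor hL (by nlinarith), log_two_gt_d9]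

theorem card_nearSet_le {α β K L δ : ℝ} (hα : α ≠ 0) (hβ : β ≠ 0) (hK : 1 ≤ K) (hL : 1 ≤ L)
    (hδ : 0 ≤ δ) :
    (#(nearSet α β K L δ) : ℝ)
      ≤ 288 * δ * (1 / |α| + 1 / |β|) * (K ^ 2 * L ^ 2) + 45 * (K * L * log (2 * K * L)) := by
  have hK0 : 0 < K := by linarith
  have hL0 : 0 < L := by linarith
  have hmaps (q) (hq : q ∈ nearSet α β K L δ) : gcds q ∈ Icc 1 ⌊2 * K⌋₊ ×ˢ Icc 1 ⌊2 * L⌋₊ := by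
    obtain ⟨hq, -⟩ := mem_filter.1 hq
    exact mem_product.2 ⟨gcd_mem_Icc_of_mem_dyadic hK0 (mem_product.1 hq).1,
      gcd_mem_Icc_of_mem_dyadic hL0 (mem_product.1 hq).2⟩
  have hbound (g) (hg : g ∈ Icc 1 ⌊2 * K⌋₊) (h) (hh : h ∈ Icc 1 ⌊2 * L⌋₊) :=
    card_fiber_le_add_min (α := α) (δ := δ) hα hβ hK0 hL0 hδ (mem_Icc.1 hg).1
      ((Nat.cast_le.2 (mem_Icc.1 hg).2).trans (Nat.floor_le (by linarith))) (mem_Icc.1 hh).1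
      ((Nat.cast_le.2 (mem_Icc.1 hh).2).trans (Nat.floor_le (by linarith)))
  set c := 72 * δ * (1 / |α| + 1 / |β|)
  rw [card_eq_sum_card_fiberwise hmaps, Nat.cast_sum, sum_product]
  calc ∑ g ∈ Icc 1 ⌊2 * K⌋₊, ∑ h ∈ Icc 1 ⌊2 * L⌋₊,
        (#{q ∈ nearSet α β K L δ | gcds q = (g, h)} : ℝ)
      ≤ ∑ g ∈ Icc 1 ⌊2 * K⌋₊, ∑ h ∈ Icc 1 ⌊2 * L⌋₊,
        (c * ((K / g) ^ 2 * (L / h) ^ 2) + 9 * min ((K / g) ^ 2) ((L / h) ^ 2)) :=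
        sum_le_sum fun g hg => sum_le_sum fun h hh => hbound g hg h hh
    _ = c * ((∑ g ∈ Icc 1 ⌊2 * K⌋₊, (K / g) ^ 2) * ∑ h ∈ Icc 1 ⌊2 * L⌋₊, (L / h) ^ 2)
        + 9 * ∑ g ∈ Icc 1 ⌊2 * K⌋₊, ∑ h ∈ Icc 1 ⌊2 * L⌋₊, min ((K / g) ^ 2) ((L / h) ^ 2) := by
        rw [sum_mul_sum, mul_sum, mul_sum, ← sum_add_distrib]
        refine sum_congr rfl fun g _ => ?_
        rw [mul_sum, mul_sum, ← sum_add_distrib]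
    _ ≤ c * ((2 * K ^ 2) * (2 * L ^ 2)) + 9 * (K * L * (5 * log (2 * K * L))) := by
        gcongr ?_ * (?_ * ?_) + 9 * ?_
        · exact sum_Icc_div_sq_le K _
        · exact sum_Icc_div_sq_le L _
        · exact (sum_min_sq_le hK0 hL0 _ _).trans
            (mul_le_mul_of_nonneg_left (two_add_log_add_log_le hK hL) (by positivity))
    _ = 288 * δ * (1 / |α| + 1 / |β|) * (K ^ 2 * L ^ 2) + 45 * (K * L * log (2 * K * L)) := by
        ring

theorem rpow_mul_rpow_div_eq_exp {k l K L : ℝ} (hk : 0 < k) (hl : 0 < l) (hK : 0 < K)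
    (hL : 0 < L) (α β : ℝ) :
    k ^ α * l ^ β / (K ^ α * L ^ β) = exp (α * (log k - log K) + β * (log l - log L)) := by
  rw [rpow_def_of_pos hk, rpow_def_of_pos hl, rpow_def_of_pos hK, rpow_def_of_pos hL,
    ← exp_add, ← exp_add, ← exp_sub]
  ring_nf

theorem neg_abs_mul_log_two_le {K k : ℝ} (hK : 0 < K) (hk : K < k ∧ k ≤ 2 * K) (α : ℝ) :
    -(|α| * log 2) ≤ α * (log k - log K) := by
  have ht₀ : 0 ≤ log k - log K := sub_nonneg.2 (log_le_log hK hk.1.le)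
  have ht₂ : log k - log K ≤ log 2 := by
    rw [← log_div (by linarith) hK.ne']
    exact log_le_log (div_pos (hK.trans hk.1) hK) ((div_le_iff₀ hK).2 (by linarith))
  nlinarith [abs_nonneg α, neg_abs_le α, mul_le_mul_of_nonneg_left ht₂ (abs_nonneg α)]

theorem mem_nearSet_of_abs_sub_le {α β K L C' : ℝ} (hK : 0 < K) (hL : 0 < L) {k k' l l' : ℤ}
    (hk : K < k ∧ (k : ℝ) ≤ 2 * K) (hk' : K < k' ∧ (k' : ℝ) ≤ 2 * K)
    (hl : L < l ∧ (l : ℝ) ≤ 2 * L) (hl' : L < l' ∧ (l' : ℝ) ≤ 2 * L)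
    (h : |(k : ℝ) ^ α * (l : ℝ) ^ β / (K ^ α * L ^ β)
      - (k' : ℝ) ^ α * (l' : ℝ) ^ β / (K ^ α * L ^ β)| ≤ C') :
    ((k, k'), (l, l')) ∈ nearSet α β K L (exp ((|α| + |β|) * log 2) * C') := by
  rw [rpow_mul_rpow_div_eq_exp (hK.trans hk.1) (hL.trans hl.1) hK hL,
    rpow_mul_rpow_div_eq_exp (hK.trans hk'.1) (hL.trans hl'.1) hK hL] at h
  have hclose : |α * (log k - log K) + β * (log l - log L)
      - (α * (log k' - log K) + β * (log l' - log L))|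
      ≤ exp ((|α| + |β|) * log 2) * |exp (α * (log k - log K) + β * (log l - log L))
        - exp (α * (log k' - log K) + β * (log l' - log L))| := abs_sub_le_exp_mul_abs_exp_sub
    (by linarith [neg_abs_mul_log_two_le hK hk α, neg_abs_mul_log_two_le hL hl β])
    (by linarith [neg_abs_mul_log_two_le hK hk' α, neg_abs_mul_log_two_le hL hl' β])
  refine mem_filter.2 ⟨mem_product.2 ⟨mem_product.2 ⟨mem_dyadic.2 hk, mem_dyadic.2 hk'⟩,
    mem_product.2 ⟨mem_dyadic.2 hl, mem_dyadic.2 hl'⟩⟩, ?_⟩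
  calc |α * logRatio (k, k') + β * logRatio (l, l')|
      = |α * (log k - log K) + β * (log l - log L)
          - (α * (log k' - log K) + β * (log l' - log L))| := by
        simp only [logRatio]; ring_nf
    _ ≤ exp ((|α| + |β|) * log 2) * C' := hclose.trans (by gcongr)

theorem stmt_6 (α β : ℝ) (hα : α ≠ 0) (hβ : β ≠ 0) :
    ∃ C > 0, ∀ K L : ℝ, 1 ≤ K → 1 ≤ L → ∀ C' : ℝ, 0 < C' →
      (Nat.card {q : ℤ × ℤ × ℤ × ℤ //
          (K < q.1 ∧ (q.1 : ℝ) ≤ 2 * K) ∧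
          (K < q.2.1 ∧ (q.2.1 : ℝ) ≤ 2 * K) ∧
          (L < q.2.2.1 ∧ (q.2.2.1 : ℝ) ≤ 2 * L) ∧
          (L < q.2.2.2 ∧ (q.2.2.2 : ℝ) ≤ 2 * L) ∧
          |(q.1 : ℝ) ^ α * (q.2.2.1 : ℝ) ^ β / (K ^ α * L ^ β)
            - (q.2.1 : ℝ) ^ α * (q.2.2.2 : ℝ) ^ β / (K ^ α * L ^ β)| ≤ C'} : ℝ)
        ≤ C * (K * L * Real.log (2 * K * L) + K ^ 2 * L ^ 2 * C') := by
  set c := 288 * exp ((|α| + |β|) * log 2) * (1 / |α| + 1 / |β|)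
  refine ⟨45 + c, by positivity, fun K L hK hL C' hC' => ?_⟩
  have hK0 : 0 < K := by linarith
  have hL0 : 0 < L := by linarith
  have hlog : 0 ≤ log (2 * K * L) := log_nonneg (by nlinarith)
  have hnear := card_nearSet_le hα hβ hK hL (by positivity : 0 ≤ exp ((|α| + |β|) * log 2) * C')
  calc (Nat.card _ : ℝ) ≤ #(nearSet α β K L (exp ((|α| + |β|) * log 2) * C')) := by
        rw [← Nat.card_eq_finsetCard]
        refine Nat.cast_le.2 (Nat.card_le_card_of_injective (fun q =>
          ⟨((q.1.1, q.1.2.1), (q.1.2.2.1, q.1.2.2.2)), mem_nearSet_of_abs_sub_le hK0 hL0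
            q.2.1 q.2.2.1 q.2.2.2.1 q.2.2.2.2.1 q.2.2.2.2.2⟩) fun a b hab => ?_)
        simp only [Subtype.mk.injEq, Prod.mk.injEq] at hab
        exact Subtype.ext (Prod.ext hab.1.1 (Prod.ext hab.1.2 (Prod.ext hab.2.1 hab.2.2)))
    _ ≤ (45 + c) * (K * L * log (2 * K * L) + K ^ 2 * L ^ 2 * C') := by
        have hc : 0 ≤ c := by positivity
        nlinarith [mul_nonneg hc (mul_nonneg (mul_nonneg hK0.le hL0.le) hlog),
          mul_nonneg (mul_nonneg (sq_nonneg K) (sq_nonneg L)) hC'.le]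
end

section
/- Let L(Q) = Σ_{j=1}^J C_j Q^{c_j} + Σ_{k=1}^K D_k Q^{-d_k} with all C_j, c_j, D_k, d_k > 0. Then for any Q ≥ Q' > 0 there exists Q₁ ∈ [Q', Q] such that L(Q₁) ≪ Σ_j Σ_k (C_j^{d_k} D_k^{c_j})^{1/(c_j+d_k)} + Σ_j C_j (Q')^{c_j} + Σ_k D_k Q^{-d_k}, with implied constant depending only on J and K. -/
lemma min_le_balanced {Cj cj Dk dk q : ℝ} (hC : 0 < Cj) (hc : 0 < cj)
    (hD : 0 < Dk) (hd : 0 < dk) (hq : 0 < q) :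
    min (Cj * q ^ cj) (Dk * q ^ (-dk)) ≤ (Cj ^ dk * Dk ^ cj) ^ (1 / (cj + dk)) := by
  have hcd : 0 < cj + dk := by linarith
  set t := dk / (cj + dk) with ht
  set s := cj / (cj + dk) with hs
  have hts : t + s = 1 := by rw [ht, hs]; field_simp; ring
  have ht0 : 0 ≤ t := by positivity
  have hs0 : 0 ≤ s := by positivity
  set a := Cj * q ^ cj with ha
  set b := Dk * q ^ (-dk) with hb
  have hap : 0 < a := by positivity
  have hbp : 0 < b := by positivity
  have hm : 0 < min a b := lt_min hap hbp
  have key : min a b ≤ a ^ t * b ^ s := by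
    calc min a b = (min a b) ^ (t + s) := by rw [hts, Real.rpow_one]
      _ = (min a b) ^ t * (min a b) ^ s := Real.rpow_add hm t s
      _ ≤ a ^ t * b ^ s := by
          apply mul_le_mul
          · exact Real.rpow_le_rpow hm.le (min_le_left _ _) ht0
          · exact Real.rpow_le_rpow hm.le (min_le_right _ _) hs0
          · positivity
          · positivity
  have h1 : a ^ t * b ^ s = Cj ^ t * Dk ^ s := by
    have e1 : (q ^ cj) ^ t = q ^ (cj * t) := (Real.rpow_mul hq.le cj t).symm
    have e2 : (q ^ (-dk)) ^ s = q ^ (-dk * s) := (Real.rpow_mul hq.le _ _).symm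
    have e3 : q ^ (cj * t) * q ^ (-dk * s) = 1 := by
      rw [← Real.rpow_add hq]
      have h0 : cj * t + -dk * s = 0 := by rw [ht, hs]; field_simp; ring
      rw [h0, Real.rpow_zero]
    rw [ha, hb, Real.mul_rpow hC.le (by positivity), Real.mul_rpow hD.le (by positivity),
      e1, e2]
    calc Cj ^ t * q ^ (cj * t) * (Dk ^ s * q ^ (-dk * s))
        = Cj ^ t * Dk ^ s * (q ^ (cj * t) * q ^ (-dk * s)) := by ring
      _ = Cj ^ t * Dk ^ s := by rw [e3, mul_one]
  have h2 : (Cj ^ dk * Dk ^ cj) ^ (1 / (cj + dk)) = Cj ^ t * Dk ^ s := by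
    rw [Real.mul_rpow (by positivity) (by positivity), ← Real.rpow_mul hC.le,
      ← Real.rpow_mul hD.le, mul_one_div, mul_one_div]
  rw [h2, ← h1]; exact key

set_option maxHeartbeats 1000000 in
theorem stmt_9 (J K : ℕ) :
    ∃ A > 0, ∀ (C c : Fin J → ℝ) (D d : Fin K → ℝ),
      (∀ j, 0 < C j) → (∀ j, 0 < c j) → (∀ k, 0 < D k) → (∀ k, 0 < d k) →
      ∀ Q Q' : ℝ, 0 < Q' → Q' ≤ Q → ∃ Q₁ : ℝ, Q' ≤ Q₁ ∧ Q₁ ≤ Q ∧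
        (∑ j, C j * Q₁ ^ (c j)) + (∑ k, D k * Q₁ ^ (-(d k)))
          ≤ A * ((∑ j, ∑ k, ((C j) ^ (d k) * (D k) ^ (c j)) ^ (1 / (c j + d k)))
              + (∑ j, C j * Q' ^ (c j)) + ∑ k, D k * Q ^ (-(d k))) := by
  refine ⟨2 * (J + K) + 2, by positivity, ?_⟩
  intro C c D d hC hc hD hd Q Q' hQ' hQQ'
  have hQ : 0 < Q := lt_of_lt_of_le hQ' hQQ'
  set A : ℝ := 2 * (J + K) + 2 with hAdef
  have hA2 : (2 : ℝ) ≤ A := by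
    have h0 : (0:ℝ) ≤ 2 * ((J:ℝ) + K) := by positivity
    rw [hAdef]; linarith
  have hA0 : (0 : ℝ) ≤ A := by linarith
  set f : ℝ → ℝ := fun q => ∑ j, C j * q ^ (c j) with hf
  set g : ℝ → ℝ := fun q => ∑ k, D k * q ^ (-(d k)) with hg
  have hfnn : ∀ q : ℝ, 0 < q → 0 ≤ f q := fun q hq =>
    Finset.sum_nonneg fun j _ => by have := hC j; positivity
  have hgnn : ∀ q : ℝ, 0 < q → 0 ≤ g q := fun q hq =>
    Finset.sum_nonneg fun k _ => by have := hD k; positivity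
  set M : ℝ := ∑ j, ∑ k, ((C j) ^ (d k) * (D k) ^ (c j)) ^ (1 / (c j + d k)) with hM
  have hMnn : 0 ≤ M :=
    Finset.sum_nonneg fun j _ => Finset.sum_nonneg fun k _ =>
      Real.rpow_nonneg (by have := hC j; have := hD k; positivity) _
  by_cases h1 : g Q' ≤ f Q'
  · refine ⟨Q', le_refl _, hQQ', ?_⟩
    show f Q' + g Q' ≤ A * (M + f Q' + g Q)
    have h2f : f Q' + g Q' ≤ 2 * f Q' := by linarith
    have hFnn := hfnn Q' hQ'
    have hGnn := hgnn Q hQ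
    nlinarith [mul_nonneg hA0 hMnn, mul_nonneg hA0 hGnn, mul_le_mul_of_nonneg_right hA2 hFnn]
  by_cases h2 : f Q ≤ g Q
  · refine ⟨Q, hQQ', le_refl _, ?_⟩
    show f Q + g Q ≤ A * (M + f Q' + g Q)
    have hFnn := hfnn Q' hQ'
    have hGnn := hgnn Q hQ
    nlinarith [mul_nonneg hA0 hMnn, mul_nonneg hA0 hFnn, mul_le_mul_of_nonneg_right hA2 hGnn]
  push_neg at h1 h2
  -- main case: f Q' < g Q' and g Q < f Q
  have hJ : J ≠ 0 := by
    rintro rfl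
    have : f Q = 0 := by simp [hf]
    have := hgnn Q hQ
    linarith
  have hK : K ≠ 0 := by
    rintro rfl
    have : g Q' = 0 := by simp [hg]
    have := hfnn Q' hQ'
    linarith
  -- continuity and IVT
  have hcont : ContinuousOn (fun q => f q - g q) (Set.Icc Q' Q) := by
    apply ContinuousOn.sub
    · apply continuousOn_finset_sum
      intro j _
      exact continuousOn_const.mul (ContinuousOn.rpow_const continuousOn_id
        fun x hx => Or.inl (ne_of_gt (lt_of_lt_of_le hQ' hx.1)))
    · apply continuousOn_finset_sum
      intro k _
      exact continuousOn_const.mul (ContinuousOn.rpow_const continuousOn_id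
        fun x hx => Or.inl (ne_of_gt (lt_of_lt_of_le hQ' hx.1)))
  have hmem : (0 : ℝ) ∈ Set.Icc (f Q' - g Q') (f Q - g Q) :=
    ⟨by linarith, by linarith⟩
  obtain ⟨q₁, hq₁mem, hq₁⟩ := intermediate_value_Icc hQQ' hcont hmem
  have hq₁pos : 0 < q₁ := lt_of_lt_of_le hQ' hq₁mem.1
  have hfg : f q₁ = g q₁ := by
    have : f q₁ - g q₁ = 0 := hq₁
    linarith
  set S : ℝ := f q₁ with hS
  have hSpos : 0 < S := by
    rw [hS, hf]
    apply Finset.sum_pos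
    · intro j _
      have := hC j; positivity
    · have : Nonempty (Fin J) := Fin.pos_iff_nonempty.1 (Nat.pos_of_ne_zero hJ)
      exact Finset.univ_nonempty
  -- find big terms
  have hj : ∃ j : Fin J, S / J ≤ C j * q₁ ^ (c j) := by
    by_contra hcon
    push_neg at hcon
    have hlt : f q₁ < ∑ _j : Fin J, S / J := by
      apply Finset.sum_lt_sum_of_nonempty
      · have : Nonempty (Fin J) := Fin.pos_iff_nonempty.1 (Nat.pos_of_ne_zero hJ)
        exact Finset.univ_nonempty
      · intro j _; exact hcon j
    rw [Finset.sum_const, Finset.card_univ, Fintype.card_fin, nsmul_eq_mul] at hlt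
    have hJ' : (0:ℝ) < J := by exact_mod_cast Nat.pos_of_ne_zero hJ
    rw [mul_div_cancel₀ S (ne_of_gt hJ')] at hlt
    exact lt_irrefl _ hlt
  have hk : ∃ k : Fin K, S / K ≤ D k * q₁ ^ (-(d k)) := by
    by_contra hcon
    push_neg at hcon
    have hlt : g q₁ < ∑ _k : Fin K, S / K := by
      apply Finset.sum_lt_sum_of_nonempty
      · have : Nonempty (Fin K) := Fin.pos_iff_nonempty.1 (Nat.pos_of_ne_zero hK)
        exact Finset.univ_nonempty
      · intro k _; exact hcon k
    rw [Finset.sum_const, Finset.card_univ, Fintype.card_fin, nsmul_eq_mul] at hlt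
    have hK' : (0:ℝ) < K := by exact_mod_cast Nat.pos_of_ne_zero hK
    rw [mul_div_cancel₀ S (ne_of_gt hK')] at hlt
    rw [← hfg] at hlt
    exact lt_irrefl _ hlt
  obtain ⟨j, hjge⟩ := hj
  obtain ⟨k, hkge⟩ := hk
  have hJK : (0:ℝ) < (J:ℝ) + K := by
    have hJ' : (0:ℝ) < J := by exact_mod_cast Nat.pos_of_ne_zero hJ
    have hK' : (0:ℝ) ≤ K := by positivity
    linarith
  have hminge : S / ((J:ℝ) + K) ≤ min (C j * q₁ ^ (c j)) (D k * q₁ ^ (-(d k))) := by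
    have hJ' : (0:ℝ) < J := by exact_mod_cast Nat.pos_of_ne_zero hJ
    have hK' : (0:ℝ) < K := by exact_mod_cast Nat.pos_of_ne_zero hK
    have e1 : S / ((J:ℝ) + K) ≤ S / J :=
      div_le_div_of_nonneg_left hSpos.le hJ' (by linarith)
    have e2 : S / ((J:ℝ) + K) ≤ S / K :=
      div_le_div_of_nonneg_left hSpos.le hK' (by linarith)
    exact le_min (le_trans e1 hjge) (le_trans e2 hkge)
  have hbal := min_le_balanced (hC j) (hc j) (hD k) (hd k) hq₁pos
  have hterm : ((C j) ^ (d k) * (D k) ^ (c j)) ^ (1 / (c j + d k)) ≤ M := by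
    rw [hM]
    have step1 : ((C j) ^ (d k) * (D k) ^ (c j)) ^ (1 / (c j + d k))
        ≤ ∑ k', ((C j) ^ (d k') * (D k') ^ (c j)) ^ (1 / (c j + d k')) := by
      apply Finset.single_le_sum (f := fun k' => ((C j) ^ (d k') * (D k') ^ (c j)) ^ (1 / (c j + d k')))
      · intro k' _
        exact Real.rpow_nonneg (by have := hC j; have := hD k'; positivity) _
      · exact Finset.mem_univ k
    refine le_trans step1 ?_
    apply Finset.single_le_sum
      (f := fun j' => ∑ k', ((C j') ^ (d k') * (D k') ^ (c j')) ^ (1 / (c j' + d k')))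
    · intro j' _
      exact Finset.sum_nonneg fun k' _ =>
        Real.rpow_nonneg (by have := hC j'; have := hD k'; positivity) _
    · exact Finset.mem_univ j
  have hSM : S ≤ ((J:ℝ) + K) * M := by
    have : S / ((J:ℝ) + K) ≤ M := le_trans hminge (le_trans hbal hterm)
    calc S = ((J:ℝ) + K) * (S / ((J:ℝ) + K)) := by field_simp
      _ ≤ ((J:ℝ) + K) * M := by
          exact mul_le_mul_of_nonneg_left this hJK.le
  refine ⟨q₁, hq₁mem.1, hq₁mem.2, ?_⟩
  show f q₁ + g q₁ ≤ A * (M + f Q' + g Q)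
  have hFnn := hfnn Q' hQ'
  have hGnn := hgnn Q hQ
  have hAge : 2 * ((J:ℝ) + K) + 2 = A := by rw [hAdef]
  have : f q₁ + g q₁ = 2 * S := by rw [← hfg]; ring
  rw [this]
  have step : 2 * S ≤ 2 * ((J:ℝ) + K) * M := by nlinarith
  calc 2 * S ≤ 2 * ((J:ℝ) + K) * M := step
    _ ≤ A * M := by nlinarith
    _ ≤ A * (M + f Q' + g Q) := by nlinarith
end

section
/- Let a, d be coprime integers with d ≥ 1, let c ∈ (1, 18/17), γ = 1/c, and suppose there exist ε > 0 and A ∈ (0, -17/39 + 6γ/13), with 2Aγ ≤ γ - A - ε and 17/39 + 7γ/13 + ε ≤ γ - A - ε, such that π_c(x; d, a) = γ x^{γ-1} π(x; d, a) + γ(1-γ) ∫_2^x u^{γ-2} π(u; d, a) du + O(x^{17/39 + 7γ/13 + ε}). Assume also the Brun–Titchmarsh bound π(y; d, a) ≪ y/(φ(d) log(y/d)) for y ≥ 2d. Then there exists C > 0 such that for 1 ≤ d ≤ x^A, π_c(x; d, a) ≤ C x^γ / (φ(d) log x). -/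
/-!
Split the integral in the asymptotic formula at `t = max 2 (x ^ (2A))`. On `[2, t]` the trivial
bound `π(u; d, a) ≤ u` costs `t ^ γ ≤ 2 x ^ (γ - A - ε)`. On `[t, x]` the hypothesis `d ≤ x ^ A`
gives `log (u / d) ≥ A log x`, so Brun–Titchmarsh yields `π(u; d, a) ≤ C₁ u / (A φ(d) log x)`,
which bounds the main term and the rest of the integral by `O(x ^ γ / (φ(d) log x))`. The error
term and the cost of `[2, t]` are `O(x ^ (γ - A - ε))`, and this is at most
`x ^ γ / (ε φ(d) log x)` because `φ(d) ≤ d ≤ x ^ A` and `ε log x ≤ x ^ ε`.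
-/

open scoped Classical

/-- π(x; d, a): the number of primes p ≤ x with p ≡ a (mod d). -/
noncomputable def primesInAP (d : ℕ) (a : ℤ) (x : ℝ) : ℝ :=
  (((Finset.Icc 1 ⌊x⌋₊).filter
      (fun p : ℕ => p.Prime ∧ (p : ℤ) % (d : ℤ) = a % (d : ℤ))).card : ℝ)

/-- π_c(x; d, a): the number of Piatetski-Shapiro primes p ≤ x with p ≡ a (mod d). -/
noncomputable def psPrimesInAP (c : ℝ) (d : ℕ) (a : ℤ) (x : ℝ) : ℝ :=
  (((Finset.Icc 1 ⌊x⌋₊).filter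
      (fun p : ℕ => p.Prime ∧ (p : ℤ) % (d : ℤ) = a % (d : ℤ) ∧
        ∃ n : ℕ, 0 < n ∧ (p : ℤ) = ⌊(n : ℝ) ^ c⌋)).card : ℝ)

open Real MeasureTheory

lemma primesInAP_nonneg (d : ℕ) (a : ℤ) (x : ℝ) : 0 ≤ primesInAP d a x := by
  unfold primesInAP; positivity

lemma primesInAP_le_self (d : ℕ) (a : ℤ) {x : ℝ} (hx : 0 ≤ x) : primesInAP d a x ≤ x := by
  unfold primesInAP
  calc (((Finset.Icc 1 ⌊x⌋₊).filter _).card : ℝ) ≤ (Finset.Icc 1 ⌊x⌋₊).card := by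
        exact_mod_cast Finset.card_filter_le _ _
    _ ≤ x := by simpa using Nat.floor_le hx

lemma primesInAP_mono (d : ℕ) (a : ℤ) : Monotone (primesInAP d a) := fun _ _ huv => by
  unfold primesInAP
  exact_mod_cast Finset.card_le_card (Finset.filter_subset_filter _
    (Finset.Icc_subset_Icc le_rfl (Nat.floor_mono huv)))

lemma intervalIntegrable_rpow_mul_primesInAP (d : ℕ) (a : ℤ) (r : ℝ) {s x : ℝ}
    (hs : 0 < s) (hx : 0 < x) :
    IntervalIntegrable (fun u => u ^ r * primesInAP d a u) volume s x := by
  refine (primesInAP_mono d a).intervalIntegrable.continuousOn_mul fun u hu => ?_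
  have hu0 : 0 < u := lt_of_lt_of_le (lt_min hs hx) hu.1
  exact (continuousAt_rpow_const u r (Or.inl hu0.ne')).continuousWithinAt

lemma integral_rpow_sub_two_mul_le {f : ℝ → ℝ} {γ K s x : ℝ} (hγ : 0 < γ) (hK : 0 ≤ K)
    (hs : 0 < s) (hsx : s ≤ x)
    (hf : IntervalIntegrable (fun u => u ^ (γ - 2) * f u) volume s x)
    (hfK : ∀ u ∈ Set.Icc s x, f u ≤ K * u) :
    ∫ u in s..x, u ^ (γ - 2) * f u ≤ K * x ^ γ / γ := by
  have hpow : ∀ u ∈ Set.Icc s x, u ^ (γ - 2) * (K * u) = K * u ^ (γ - 1) := fun u hu => by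
    rw [mul_left_comm, ← rpow_add_one (hs.trans_le hu.1).ne']
    ring_nf
  calc ∫ u in s..x, u ^ (γ - 2) * f u ≤ ∫ u in s..x, K * u ^ (γ - 1) :=
        intervalIntegral.integral_mono_on hsx hf
          ((intervalIntegral.intervalIntegrable_rpow' (by linarith)).const_mul K) fun u hu =>
          (hpow u hu).symm ▸ mul_le_mul_of_nonneg_left (hfK u hu)
            (rpow_nonneg (hs.trans_le hu.1).le _)
    _ = K * (x ^ γ - s ^ γ) / γ := by
        rw [intervalIntegral.integral_const_mul,
          integral_rpow (Or.inl (by linarith : (-1 : ℝ) < γ - 1))]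
        ring_nf
    _ ≤ K * x ^ γ / γ := by
        gcongr
        linarith [rpow_nonneg hs.le γ]

lemma mainTerm_le_of_primesInAP_le {d : ℕ} {a : ℤ} {γ K t x : ℝ} (hγ0 : 0 < γ) (hγ1 : γ ≤ 1)
    (hK : 0 ≤ K) (ht : 2 ≤ t) (htx : t ≤ x)
    (hπ : ∀ u ∈ Set.Icc t x, primesInAP d a u ≤ K * u) :
    γ * x ^ (γ - 1) * primesInAP d a x
        + γ * (1 - γ) * ∫ u in (2 : ℝ)..x, u ^ (γ - 2) * primesInAP d a u
      ≤ 2 * K * x ^ γ + t ^ γ := by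
  have hx : 0 < x := by linarith
  have hI₁ : ∫ u in (2 : ℝ)..t, u ^ (γ - 2) * primesInAP d a u ≤ 1 * t ^ γ / γ :=
    integral_rpow_sub_two_mul_le hγ0 zero_le_one two_pos ht
      (intervalIntegrable_rpow_mul_primesInAP d a _ two_pos (by linarith))
      fun u hu => (one_mul u).symm ▸ primesInAP_le_self d a (by linarith [hu.1])
  have hI₂ : ∫ u in t..x, u ^ (γ - 2) * primesInAP d a u ≤ K * x ^ γ / γ :=
    integral_rpow_sub_two_mul_le hγ0 hK (by linarith) htx
      (intervalIntegrable_rpow_mul_primesInAP d a _ (by linarith) hx) hπ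
  rw [← intervalIntegral.integral_add_adjacent_intervals (b := t)
    (intervalIntegrable_rpow_mul_primesInAP d a _ two_pos (by linarith))
    (intervalIntegrable_rpow_mul_primesInAP d a _ (by linarith) hx)]
  have hfirst : γ * x ^ (γ - 1) * primesInAP d a x ≤ K * x ^ γ := by
    calc γ * x ^ (γ - 1) * primesInAP d a x ≤ 1 * x ^ (γ - 1) * (K * x) := by
          gcongr
          exacts [primesInAP_nonneg d a x, hπ x ⟨htx, le_rfl⟩]
      _ = K * x ^ γ := by rw [one_mul, mul_left_comm, ← rpow_add_one hx.ne']; ring_nf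
  have hsecond : γ * (1 - γ) * ((∫ u in (2 : ℝ)..t, u ^ (γ - 2) * primesInAP d a u)
      + ∫ u in t..x, u ^ (γ - 2) * primesInAP d a u) ≤ t ^ γ + K * x ^ γ := by
    calc _ ≤ γ * (1 - γ) * (1 * t ^ γ / γ + K * x ^ γ / γ) := by gcongr
      _ = (1 - γ) * (t ^ γ + K * x ^ γ) := by field_simp
      _ ≤ t ^ γ + K * x ^ γ := mul_le_of_le_one_left (by positivity) (by linarith)
  linarith

lemma two_mul_le_max_two_rpow {d : ℕ} {A x : ℝ} (hd : 1 ≤ d) (hx : 0 < x)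
    (hdx : (d : ℝ) ≤ x ^ A) : 2 * (d : ℝ) ≤ max 2 (x ^ (2 * A)) := by
  rcases Nat.lt_or_ge d 2 with hd2 | hd2
  · obtain rfl : d = 1 := by omega
    simp
  · refine le_max_of_le_right ?_
    rw [two_mul A, rpow_add hx]
    exact mul_le_mul (le_trans (by exact_mod_cast hd2) hdx) hdx (by positivity)
      (rpow_nonneg hx.le A)

lemma max_two_rpow_rpow_le {A γ e x : ℝ} (hx : 1 ≤ x) (hγ1 : γ ≤ 1)
    (he : 2 * A * γ ≤ e) (he0 : 0 ≤ e) : max 2 (x ^ (2 * A)) ^ γ ≤ 2 * x ^ e := by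
  have hxe : 1 ≤ x ^ e := one_le_rpow hx he0
  rcases le_total (x ^ (2 * A)) 2 with h | h
  · rw [max_eq_left h]
    calc (2 : ℝ) ^ γ ≤ 2 ^ (1 : ℝ) := rpow_le_rpow_of_exponent_le one_le_two hγ1
      _ ≤ 2 * x ^ e := by rw [rpow_one]; linarith
  · rw [max_eq_right h, ← rpow_mul (by linarith)]
    linarith [rpow_le_rpow_of_exponent_le hx he]

lemma mul_rpow_sub_le_div_totient_mul_log {d : ℕ} {A ε e x : ℝ} (hd : 1 ≤ d) (hε : 0 < ε)
    (hx : 1 < x) (hdx : (d : ℝ) ≤ x ^ A) :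
    ε * x ^ (e - A - ε) ≤ x ^ e / ((d.totient : ℝ) * log x) := by
  have hx0 : 0 < x := by linarith
  have hφ : (0 : ℝ) < d.totient := by exact_mod_cast Nat.totient_pos.mpr hd
  rw [le_div_iff₀ (mul_pos hφ (log_pos hx))]
  have hφd : (d.totient : ℝ) ≤ x ^ A := le_trans (by exact_mod_cast Nat.totient_le d) hdx
  calc ε * x ^ (e - A - ε) * ((d.totient : ℝ) * log x)
      ≤ ε * x ^ (e - A - ε) * (x ^ A * (x ^ ε / ε)) := by
        refine mul_le_mul_of_nonneg_left ?_ (by positivity)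
        exact mul_le_mul hφd (log_le_rpow_div hx0.le hε) (log_pos hx).le (rpow_nonneg hx0.le A)
    _ = x ^ (e - A - ε) * x ^ A * x ^ ε := by field_simp
    _ = x ^ e := by rw [← rpow_add hx0, ← rpow_add hx0]; ring_nf

lemma primesInAP_le_of_brunTitchmarsh {d : ℕ} {a : ℤ} {A C₁ x u : ℝ}
    (hBT : ∀ y : ℝ, 2 * d ≤ y →
      primesInAP d a y ≤ C₁ * y / ((d.totient : ℝ) * log (y / d)))
    (hC₁ : 0 ≤ C₁) (hd : 1 ≤ d) (hA : 0 < A) (hx : 1 < x) (hdx : (d : ℝ) ≤ x ^ A)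
    (hu : max 2 (x ^ (2 * A)) ≤ u) :
    primesInAP d a u ≤ C₁ / ((d.totient : ℝ) * (A * log x)) * u := by
  have hx0 : 0 < x := by linarith
  have hd0 : (0 : ℝ) < d := by exact_mod_cast hd
  have hlog : A * log x ≤ log (u / d) := by
    rw [← log_rpow hx0]
    refine log_le_log (rpow_pos_of_pos hx0 A) ((le_div_iff₀ hd0).mpr ?_)
    calc x ^ A * d ≤ x ^ A * x ^ A := by gcongr
      _ = x ^ (2 * A) := by rw [two_mul, rpow_add hx0]
      _ ≤ u := le_of_max_le_right hu
  calc primesInAP d a u ≤ C₁ * u / ((d.totient : ℝ) * log (u / d)) :=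
        hBT u ((two_mul_le_max_two_rpow hd hx0 hdx).trans hu)
    _ ≤ C₁ * u / ((d.totient : ℝ) * (A * log x)) := by
        have : 0 < A * log x := mul_pos hA (log_pos hx)
        have : 0 ≤ u := by linarith [le_of_max_le_left hu]
        gcongr
    _ = C₁ / ((d.totient : ℝ) * (A * log x)) * u := by ring

theorem stmt_17_general (c γ A ε : ℝ) (a : ℤ) (d : ℕ) (hd : 1 ≤ d)
    (hc1 : 1 < c) (hγ : γ = 1 / c) (hε : 0 < ε)
    (hA0 : 0 < A)
    (h1 : 2 * A * γ ≤ γ - A - ε) (h2 : 17 / 39 + 7 * γ / 13 + ε ≤ γ - A - ε)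
    (Hasymp : ∃ C₀ > 0, ∀ x : ℝ, 2 ≤ x →
      |psPrimesInAP c d a x
          - (γ * x ^ (γ - 1) * primesInAP d a x
             + γ * (1 - γ) * ∫ u in (2 : ℝ)..x, u ^ (γ - 2) * primesInAP d a u)|
        ≤ C₀ * x ^ (17 / 39 + 7 * γ / 13 + ε))
    (HBT : ∃ C₁ > 0, ∀ y : ℝ, 2 * d ≤ y →
      primesInAP d a y ≤ C₁ * y / ((d.totient : ℝ) * Real.log (y / d))) :
    ∃ C > 0, ∀ x : ℝ, 2 ≤ x → (d : ℝ) ≤ x ^ A →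
      psPrimesInAP c d a x ≤ C * x ^ γ / ((d.totient : ℝ) * Real.log x) := by
  obtain ⟨C₀, hC₀, hasymp⟩ := Hasymp
  obtain ⟨C₁, hC₁, hBT⟩ := HBT
  have hγ0 : 0 < γ := hγ ▸ by positivity
  have hγ1 : γ < 1 := hγ ▸ (div_lt_one (by linarith)).mpr hc1
  have hA : 2 * A ≤ 1 := (lt_of_mul_lt_mul_right (by linarith : 2 * A * γ < 1 * γ) hγ0.le).le
  refine ⟨2 * C₁ / A + (2 + C₀) / ε, by positivity, fun x hx hdx => ?_⟩
  set P := x ^ γ / ((d.totient : ℝ) * log x)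
  set K := C₁ / ((d.totient : ℝ) * (A * log x))
  have hφ : (0 : ℝ) < d.totient := by exact_mod_cast Nat.totient_pos.mpr hd
  have hlog : 0 < log x := log_pos (by linarith)
  have htx : max 2 (x ^ (2 * A)) ≤ x :=
    max_le hx (by simpa using rpow_le_rpow_of_exponent_le (by linarith : 1 ≤ x) hA)
  have hK : 0 ≤ K := (div_pos hC₁ (mul_pos hφ (mul_pos hA0 hlog))).le
  have hmain := mainTerm_le_of_primesInAP_le hγ0 hγ1.le hK (le_max_left _ _) htx fun u hu =>
    primesInAP_le_of_brunTitchmarsh hBT hC₁.le hd hA0 (by linarith) hdx hu.1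
  have hKP : K * x ^ γ = C₁ / A * P := by simp only [K, P]; field_simp
  have hεP : ε * x ^ (γ - A - ε) ≤ P :=
    mul_rpow_sub_le_div_totient_mul_log hd hε (by linarith) hdx
  have htγ := max_two_rpow_rpow_le (x := x) (by linarith) hγ1.le h1 (by linarith)
  have herr : C₀ * x ^ (17 / 39 + 7 * γ / 13 + ε) ≤ C₀ * x ^ (γ - A - ε) := by
    gcongr; linarith
  calc psPrimesInAP c d a x ≤ 2 * (C₁ / A * P) + (2 + C₀) * x ^ (γ - A - ε) := by
        linarith [(abs_le.mp (hasymp x hx)).2]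
    _ ≤ 2 * (C₁ / A * P) + (2 + C₀) / ε * P := by
        rw [show (2 + C₀) * x ^ (γ - A - ε) = (2 + C₀) / ε * (ε * x ^ (γ - A - ε)) by
          field_simp]
        gcongr
    _ = (2 * C₁ / A + (2 + C₀) / ε) * x ^ γ / ((d.totient : ℝ) * log x) := by ring

theorem stmt_17 (c γ A ε : ℝ) (a : ℤ) (d : ℕ) (hd : 1 ≤ d)
    (hcop : IsCoprime a (d : ℤ))
    (hc1 : 1 < c) (hc2 : c < 18 / 17) (hγ : γ = 1 / c) (hε : 0 < ε)
    (hA0 : 0 < A) (hA1 : A < -17 / 39 + 6 * γ / 13)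
    (h1 : 2 * A * γ ≤ γ - A - ε) (h2 : 17 / 39 + 7 * γ / 13 + ε ≤ γ - A - ε)
    (Hasymp : ∃ C₀ > 0, ∀ x : ℝ, 2 ≤ x →
      |psPrimesInAP c d a x
          - (γ * x ^ (γ - 1) * primesInAP d a x
             + γ * (1 - γ) * ∫ u in (2 : ℝ)..x, u ^ (γ - 2) * primesInAP d a u)|
        ≤ C₀ * x ^ (17 / 39 + 7 * γ / 13 + ε))
    (HBT : ∃ C₁ > 0, ∀ y : ℝ, 2 * d ≤ y →
      primesInAP d a y ≤ C₁ * y / ((d.totient : ℝ) * Real.log (y / d))) :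
    ∃ C > 0, ∀ x : ℝ, 2 ≤ x → (d : ℝ) ≤ x ^ A →
      psPrimesInAP c d a x ≤ C * x ^ γ / ((d.totient : ℝ) * Real.log x) :=
  stmt_17_general c γ A ε a d hd hc1 hγ hε hA0 h1 h2 Hasymp HBT
end
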